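/- arXiv:2402.06626 — 2 statements merged into one kernel-verified Lean document; each statement's English description precedes it below -/
import Mathlib

section
/- In the two-player game with A = {Top, Bottom}, B = {Left, Right} and payoffs (u1, u2): (Top,Left) = (3, 0), (Top,Right) = (1, 1), (Bottom,Left) = (2, 1), (Bottom,Right) = (0, 0): the unique Nash equilibrium is the pure profile (Top, Right), in which the leader's utility is 1, whereas the leader's value of the pure commitment (Bottom, 0) with zero payments is 2. Hence the leader's optimal value over pure commitments with payments strictly exceeds her utility in every Nash equilibrium of the base game. -/
open Finset

noncomputable section

/-- A probability distribution on a finite type, given as a weight function. -/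
def IsDist {X : Type*} [Fintype X] (σ : X → ℝ) : Prop :=
  (∀ x, 0 ≤ σ x) ∧ ∑ x, σ x = 1

/-- The point mass at `x0`. -/
def delta {X : Type*} [DecidableEq X] (x0 : X) : X → ℝ :=
  fun x => if x = x0 then 1 else 0

/-- Follower's induced utility under commitment `(σ, P)` when playing `b`. -/
def folU {A B : Type*} [Fintype A] (u2 : A → B → ℝ) (σ : A → ℝ) (P : A → B → ℝ) (b : B) : ℝ :=
  ∑ a, σ a * (u2 a b + P a b)

/-- Leader's utility under commitment `(σ, P)` when the follower plays `b`. -/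
def leadU {A B : Type*} [Fintype A] (u1 : A → B → ℝ) (σ : A → ℝ) (P : A → B → ℝ) (b : B) : ℝ :=
  ∑ a, σ a * (u1 a b - P a b)

/-- The leader's value of the commitment `(σ, P)`: the follower plays an action maximizing
his induced utility, tiebreaking in favor of the leader. -/
def leaderValue {A B : Type*} [Fintype A] [Fintype B] (u1 u2 : A → B → ℝ)
    (σ : A → ℝ) (P : A → B → ℝ) : ℝ :=
  sSup {x | ∃ b : B, (∀ b' : B, folU u2 σ P b' ≤ folU u2 σ P b) ∧ x = leadU u1 σ P b}

/-- Nash equilibrium of a finite two-player game. -/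
def NashEq {A B : Type*} [Fintype A] [Fintype B] (u1 u2 : A → B → ℝ)
    (σ1 : A → ℝ) (σ2 : B → ℝ) : Prop :=
  IsDist σ1 ∧ IsDist σ2 ∧
  (∀ a : A, 0 < σ1 a → ∀ a' : A, ∑ b, σ2 b * u1 a' b ≤ ∑ b, σ2 b * u1 a b) ∧
  (∀ b : B, 0 < σ2 b → ∀ b' : B, ∑ a, σ1 a * u2 a b' ≤ ∑ a, σ1 a * u2 a b)

/-- Leader's actions. -/
inductive RA5 | Top | Bottom
  deriving DecidableEq

instance : Fintype RA5 := ⟨{RA5.Top, RA5.Bottom}, fun x => by cases x <;> simp⟩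

/-- Follower's actions. -/
inductive CA5 | Left | Right
  deriving DecidableEq

instance : Fintype CA5 := ⟨{CA5.Left, CA5.Right}, fun x => by cases x <;> simp⟩

/-- Leader's utility. -/
def u1f : RA5 → CA5 → ℝ
  | .Top, .Left => 3
  | .Top, .Right => 1
  | .Bottom, .Left => 2
  | .Bottom, .Right => 0

/-- Follower's utility. -/
def u2f : RA5 → CA5 → ℝ
  | .Top, .Left => 0
  | .Top, .Right => 1
  | .Bottom, .Left => 1
  | .Bottom, .Right => 0

/-! Top strictly dominates Bottom for the leader, so every Nash equilibrium has the leader play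
Top, to which Right is the follower's only best response; this pins down the equilibrium (Top, Right)
with leader utility 1. Committing to Bottom instead makes Left the follower's strict best response,
giving the leader 2, and the values of pure commitments are bounded, so their supremum is at least 2. -/

section PointMass

variable {X : Type*} [DecidableEq X]

lemma eq_of_delta_pos {x0 x : X} (hx : 0 < delta x0 x) : x = x0 := by
  by_contra hne
  simp [delta, hne] at hx

variable [Fintype X]

lemma sum_delta_mul (x0 : X) (f : X → ℝ) : ∑ x, delta x0 x * f x = f x0 := by
  simp [delta]

lemma isDist_delta (x0 : X) : IsDist (delta x0) :=
  ⟨fun x => by unfold delta; split_ifs <;> norm_num, by simpa using sum_delta_mul x0 fun _ => 1⟩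

lemma IsDist.eq_delta_of_forall_ne {σ : X → ℝ} (hσ : IsDist σ) {x0 : X}
    (h : ∀ x, x ≠ x0 → σ x = 0) : σ = delta x0 := by
  have hx0 : σ x0 = 1 := by
    rw [← hσ.2, Finset.sum_eq_single x0 (fun x _ hx => h x hx) (by simp)]
  funext x
  by_cases hx : x = x0
  · simp [delta, hx, hx0]
  · simp [delta, hx, h x hx]

end PointMass

section Commitment

variable {A B : Type*} [Fintype A]

lemma folU_delta [DecidableEq A] (u2 P : A → B → ℝ) (a0 : A) (b : B) :
    folU u2 (delta a0) P b = u2 a0 b + P a0 b :=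
  sum_delta_mul a0 _

lemma leadU_delta [DecidableEq A] (u1 P : A → B → ℝ) (a0 : A) (b : B) :
    leadU u1 (delta a0) P b = u1 a0 b - P a0 b :=
  sum_delta_mul a0 _

variable [Fintype B]

lemma leaderValue_eq_of_forall_folU_lt (u1 u2 : A → B → ℝ) (σ : A → ℝ) (P : A → B → ℝ) {b : B}
    (h : ∀ b', b' ≠ b → folU u2 σ P b' < folU u2 σ P b) :
    leaderValue u1 u2 σ P = leadU u1 σ P b := by
  have hbest : ∀ b', folU u2 σ P b' ≤ folU u2 σ P b := fun b' => by
    by_cases hb' : b' = b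
    · rw [hb']
    · exact (h b' hb').le
  suffices hset : {x | ∃ b' : B, (∀ b'' : B, folU u2 σ P b'' ≤ folU u2 σ P b') ∧
      x = leadU u1 σ P b'} = {leadU u1 σ P b} by
    rw [leaderValue, hset, csSup_singleton]
  ext x
  constructor
  · rintro ⟨b', hb', rfl⟩
    by_contra hne
    exact (h b' (fun hb => hne (by rw [hb]; rfl))).not_ge (hb' b)
  · rintro rfl
    exact ⟨b, hbest, rfl⟩

lemma leaderValue_le_of_forall_leadU_le [Nonempty B] {u1 u2 : A → B → ℝ} {σ : A → ℝ}
    {P : A → B → ℝ} {c : ℝ} (h : ∀ b, leadU u1 σ P b ≤ c) : leaderValue u1 u2 σ P ≤ c := by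
  obtain ⟨b, hb⟩ := Finite.exists_max (folU u2 σ P)
  exact csSup_le ⟨_, b, hb, rfl⟩ fun _ ⟨b', _, hx⟩ => hx ▸ h b'

lemma bddAbove_pureCommitmentValues [DecidableEq A] [Nonempty B] (u1 u2 : A → B → ℝ) :
    BddAbove {x | ∃ (a1 : A) (P : A → B → ℝ), (∀ a b, 0 ≤ P a b) ∧
      x = leaderValue u1 u2 (delta a1) P} := by
  obtain ⟨c, hc⟩ := (Set.finite_range (Function.uncurry u1)).bddAbove
  refine ⟨c, ?_⟩
  rintro _ ⟨a1, P, hP, rfl⟩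
  refine leaderValue_le_of_forall_leadU_le fun b => ?_
  have hu : u1 a1 b ≤ c := hc ⟨(a1, b), rfl⟩
  rw [leadU_delta]
  linarith [hP a1 b]

end Commitment

section Nash

variable {A B : Type*} [Fintype A] [Fintype B] {u1 u2 : A → B → ℝ} {σ1 : A → ℝ} {σ2 : B → ℝ}

lemma NashEq.eq_zero_of_strictlyDominated (hN : NashEq u1 u2 σ1 σ2) {a a' : A}
    (hdom : ∀ b, u1 a b < u1 a' b) : σ1 a = 0 := by
  obtain ⟨⟨hσ1, -⟩, ⟨hσ2, hσ2_sum⟩, hA, -⟩ := hN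
  refine (hσ1 a).antisymm' (not_lt.mp fun ha => (hA a ha a').not_gt ?_)
  have hsupp : ∑ _b : B, (0 : ℝ) < ∑ b, σ2 b := by rw [hσ2_sum]; simp
  obtain ⟨b, -, hb⟩ := Finset.exists_lt_of_sum_lt hsupp
  exact Finset.sum_lt_sum (fun b _ => mul_le_mul_of_nonneg_left (hdom b).le (hσ2 b))
    ⟨b, Finset.mem_univ b, mul_lt_mul_of_pos_left (hdom b) hb⟩

lemma NashEq.eq_zero_of_not_bestResponse (hN : NashEq u1 u2 σ1 σ2) {b b' : B}
    (hlt : ∑ a, σ1 a * u2 a b < ∑ a, σ1 a * u2 a b') : σ2 b = 0 :=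
  (hN.2.1.1 b).antisymm' (not_lt.mp fun hb => (hN.2.2.2 b hb b').not_gt hlt)

lemma nashEq_delta_delta_iff [DecidableEq A] [DecidableEq B] (a0 : A) (b0 : B) :
    NashEq u1 u2 (delta a0) (delta b0) ↔ (∀ a, u1 a b0 ≤ u1 a0 b0) ∧ (∀ b, u2 a0 b ≤ u2 a0 b0) := by
  simp only [NashEq, isDist_delta, sum_delta_mul, true_and]
  constructor
  · rintro ⟨hA, hB⟩
    exact ⟨hA a0 (by simp [delta]), hB b0 (by simp [delta])⟩
  · rintro ⟨hA, hB⟩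
    exact ⟨fun a ha => eq_of_delta_pos ha ▸ hA, fun b hb => eq_of_delta_pos hb ▸ hB⟩

lemma sum_sum_delta_mul_delta_mul [DecidableEq A] [DecidableEq B] (u : A → B → ℝ) (a0 : A)
    (b0 : B) : ∑ a, ∑ b, delta a0 a * delta b0 b * u a b = u a0 b0 := by
  simp only [mul_assoc, ← Finset.mul_sum, sum_delta_mul]

end Nash

instance : Nonempty CA5 := ⟨.Left⟩

lemma nashEq_u1f_u2f_iff (σ1 : RA5 → ℝ) (σ2 : CA5 → ℝ) :
    NashEq u1f u2f σ1 σ2 ↔ σ1 = delta RA5.Top ∧ σ2 = delta CA5.Right := by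
  constructor
  · intro hN
    have hσ1 : σ1 = delta RA5.Top := hN.1.eq_delta_of_forall_ne fun
      | .Top, h => absurd rfl h
      | .Bottom, _ => hN.eq_zero_of_strictlyDominated (a' := .Top) fun b => by
          cases b <;> norm_num [u1f]
    subst hσ1
    refine ⟨rfl, hN.2.1.eq_delta_of_forall_ne fun
      | .Right, h => absurd rfl h
      | .Left, _ => hN.eq_zero_of_not_bestResponse (b' := .Right) ?_⟩
    simp [sum_delta_mul, u2f]
  · rintro ⟨rfl, rfl⟩
    rw [nashEq_delta_delta_iff]
    exact ⟨fun a => by cases a <;> norm_num [u1f], fun b => by cases b <;> norm_num [u2f]⟩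

lemma leaderValue_bottom_noPayment : leaderValue u1f u2f (delta RA5.Bottom) (fun _ _ => 0) = 2 := by
  rw [leaderValue_eq_of_forall_folU_lt (b := CA5.Left), leadU_delta]
  · norm_num [u1f]
  · rintro (_ | _) h
    · exact absurd rfl h
    · norm_num [folU_delta, u2f]

theorem stmt5 :
    (∀ (σ1 : RA5 → ℝ) (σ2 : CA5 → ℝ),
        NashEq u1f u2f σ1 σ2 ↔ (σ1 = delta RA5.Top ∧ σ2 = delta CA5.Right))
    ∧ (∑ a, ∑ b, delta RA5.Top a * delta CA5.Right b * u1f a b) = 1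
    ∧ leaderValue u1f u2f (delta RA5.Bottom) (fun _ _ => 0) = 2
    ∧ (∀ (σ1 : RA5 → ℝ) (σ2 : CA5 → ℝ), NashEq u1f u2f σ1 σ2 →
        (∑ a, ∑ b, σ1 a * σ2 b * u1f a b)
          < sSup {x | ∃ (a1 : RA5) (P : RA5 → CA5 → ℝ), (∀ a b, 0 ≤ P a b) ∧
              x = leaderValue u1f u2f (delta a1) P}) := by
  have hNashValue : ∑ a, ∑ b, delta RA5.Top a * delta CA5.Right b * u1f a b = 1 := by
    rw [sum_sum_delta_mul_delta_mul]; rfl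
  refine ⟨nashEq_u1f_u2f_iff, hNashValue, leaderValue_bottom_noPayment, fun σ1 σ2 hN => ?_⟩
  obtain ⟨rfl, rfl⟩ := (nashEq_u1f_u2f_iff σ1 σ2).mp hN
  have hBottom : (2 : ℝ) ≤ sSup {x | ∃ (a1 : RA5) (P : RA5 → CA5 → ℝ), (∀ a b, 0 ≤ P a b) ∧
      x = leaderValue u1f u2f (delta a1) P} :=
    le_csSup (bddAbove_pureCommitmentValues u1f u2f)
      ⟨.Bottom, fun _ _ => 0, fun _ _ => le_rfl, leaderValue_bottom_noPayment.symm⟩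
  rw [hNashValue]
  linarith
end
end

section
/- For every two-player Bayesian game with leader types, the supremum over all commitments (σ, P) — with σ : Θ → Δ(A) and P : A × B → ℝ≥0 — of the leader's value equals max over b ∈ B of the optimal value of the program: maximize Σ_{θ∈Θ} π(θ) Σ_{a∈A} p^θ(a) u1^θ(a,b) − c over families (p^θ)_{θ∈Θ} with each p^θ ∈ Δ(A) and c ≥ 0, subject to Σ_θ π(θ) Σ_a p^θ(a) u2(a,b) + c ≥ Σ_θ π(θ) Σ_a p^θ(a) u2(a,b') for every b' ∈ B. Moreover, both the outer supremum and each inner program's optimum are attained. -/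
/-!
A commitment `(σ, P)` at which the follower best-responds with `b` gives a feasible point of the
program for `b`: keep `p = σ` and let `c` be the expected payment for `b`, which is nonnegative.
Conversely, an optimal point `(p, c)` of the best program is realised by committing to `p` and
paying `c` whenever the follower plays `b`, whatever the leader's action. Each program attains its
optimum because for fixed `p` the best `c` is the largest shortfall
`max_{b'} (E_p u2(·, b') - E_p u2(·, b))`, so the optimum is that of a continuous function on the
compact product of simplices.
-/

open Finset

noncomputable section

/-- Follower's induced utility under commitment `(σ, P)` when playing `b`, in a two-player
Bayesian game with leader types. -/
def bFolU {Θ A B : Type*} [Fintype Θ] [Fintype A]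
    (π : Θ → ℝ) (u2 : A → B → ℝ) (σ : Θ → A → ℝ) (P : A → B → ℝ) (b : B) : ℝ :=
  ∑ θ, π θ * ∑ a, σ θ a * (u2 a b + P a b)

/-- Leader's ex-ante utility under commitment `(σ, P)` when the follower plays `b`. -/
def bLeadU {Θ A B : Type*} [Fintype Θ] [Fintype A]
    (π : Θ → ℝ) (u1 : Θ → A → B → ℝ) (σ : Θ → A → ℝ) (P : A → B → ℝ) (b : B) : ℝ :=
  ∑ θ, π θ * ∑ a, σ θ a * (u1 θ a b - P a b)

/-- The leader's value of the commitment `(σ, P)`: the follower plays an action maximizing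
his induced utility, tiebreaking in favor of the leader's ex-ante utility. -/
def bLeaderValue {Θ A B : Type*} [Fintype Θ] [Fintype A] [Fintype B]
    (π : Θ → ℝ) (u1 : Θ → A → B → ℝ) (u2 : A → B → ℝ)
    (σ : Θ → A → ℝ) (P : A → B → ℝ) : ℝ :=
  sSup {x | ∃ b : B, (∀ b' : B, bFolU π u2 σ P b' ≤ bFolU π u2 σ P b) ∧
    x = bLeadU π u1 σ P b}

/-- The set of leader values achievable by commitments `(σ, P)`. -/
def bCommitVals {Θ A B : Type*} [Fintype Θ] [Fintype A] [Fintype B]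
    (π : Θ → ℝ) (u1 : Θ → A → B → ℝ) (u2 : A → B → ℝ) : Set ℝ :=
  {x | ∃ (σ : Θ → A → ℝ) (P : A → B → ℝ), (∀ θ, IsDist (σ θ)) ∧ (∀ a b, 0 ≤ P a b) ∧
    x = bLeaderValue π u1 u2 σ P}

/-- The feasible objective values of the LP for incentivizing the follower action `b`:
maximize `Σ_θ π(θ) Σ_a p^θ(a) u1^θ(a,b) − c` over families `(p^θ)` of distributions on `A`
and `c ≥ 0`, subject to
`Σ_θ π(θ) Σ_a p^θ(a) u2(a,b) + c ≥ Σ_θ π(θ) Σ_a p^θ(a) u2(a,b')` for every `b'`. -/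
def bInnerSet {Θ A B : Type*} [Fintype Θ] [Fintype A]
    (π : Θ → ℝ) (u1 : Θ → A → B → ℝ) (u2 : A → B → ℝ) (b : B) : Set ℝ :=
  {x | ∃ (p : Θ → A → ℝ) (c : ℝ), (∀ θ, IsDist (p θ)) ∧ 0 ≤ c ∧
    (∀ b' : B, (∑ θ, π θ * ∑ a, p θ a * u2 a b')
        ≤ (∑ θ, π θ * ∑ a, p θ a * u2 a b) + c) ∧
    x = (∑ θ, π θ * ∑ a, p θ a * u1 θ a b) - c}

section Development

variable {Θ A B : Type*} [Fintype Θ] [Fintype A]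

def exAnte (π : Θ → ℝ) (p : Θ → A → ℝ) (f : Θ → A → ℝ) : ℝ :=
  ∑ θ, π θ * ∑ a, p θ a * f θ a

lemma exAnte_add (π : Θ → ℝ) (p : Θ → A → ℝ) (f g : Θ → A → ℝ) :
    exAnte π p (f + g) = exAnte π p f + exAnte π p g := by
  simp only [exAnte, Pi.add_apply, mul_add, sum_add_distrib]

lemma exAnte_sub (π : Θ → ℝ) (p : Θ → A → ℝ) (f g : Θ → A → ℝ) :
    exAnte π p (f - g) = exAnte π p f - exAnte π p g := by
  simp only [exAnte, Pi.sub_apply, mul_sub, sum_sub_distrib]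

lemma exAnte_nonneg {π : Θ → ℝ} {p : Θ → A → ℝ} {f : Θ → A → ℝ} (hπ : ∀ θ, 0 ≤ π θ)
    (hp : ∀ θ a, 0 ≤ p θ a) (hf : ∀ θ a, 0 ≤ f θ a) : 0 ≤ exAnte π p f :=
  sum_nonneg fun θ _ => mul_nonneg (hπ θ) (sum_nonneg fun a _ => mul_nonneg (hp θ a) (hf θ a))

lemma exAnte_const {π : Θ → ℝ} {p : Θ → A → ℝ} (hπ : IsDist π) (hp : ∀ θ, IsDist (p θ))
    (k : ℝ) : exAnte π p (fun _ _ => k) = k := by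
  simp only [exAnte, ← sum_mul, (hp _).2, one_mul, hπ.2]

lemma continuous_exAnte (π : Θ → ℝ) (f : Θ → A → ℝ) :
    Continuous fun p : Θ → A → ℝ => exAnte π p f := by
  unfold exAnte
  fun_prop

lemma bFolU_eq (π : Θ → ℝ) (u2 : A → B → ℝ) (σ : Θ → A → ℝ) (P : A → B → ℝ) (b : B) :
    bFolU π u2 σ P b = exAnte π σ (fun _ a => u2 a b) + exAnte π σ (fun _ a => P a b) :=
  exAnte_add π σ _ _

lemma bLeadU_eq (π : Θ → ℝ) (u1 : Θ → A → B → ℝ) (σ : Θ → A → ℝ) (P : A → B → ℝ) (b : B) :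
    bLeadU π u1 σ P b = exAnte π σ (fun θ a => u1 θ a b) - exAnte π σ (fun _ a => P a b) :=
  exAnte_sub π σ _ _

def IsBestResponse (π : Θ → ℝ) (u2 : A → B → ℝ) (σ : Θ → A → ℝ) (P : A → B → ℝ) (b : B) :
    Prop :=
  ∀ b', bFolU π u2 σ P b' ≤ bFolU π u2 σ P b

lemma exists_isBestResponse [Fintype B] [Nonempty B] (π : Θ → ℝ) (u2 : A → B → ℝ)
    (σ : Θ → A → ℝ) (P : A → B → ℝ) : ∃ b, IsBestResponse π u2 σ P b := by
  obtain ⟨b, -, hb⟩ := exists_max_image univ (bFolU π u2 σ P) univ_nonempty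
  exact ⟨b, fun b' => hb b' (mem_univ b')⟩

lemma bLeaderValue_le [Fintype B] [Nonempty B] {π : Θ → ℝ} {u1 : Θ → A → B → ℝ}
    {u2 : A → B → ℝ} {σ : Θ → A → ℝ} {P : A → B → ℝ} {M : ℝ}
    (h : ∀ b, IsBestResponse π u2 σ P b → bLeadU π u1 σ P b ≤ M) :
    bLeaderValue π u1 u2 σ P ≤ M := by
  obtain ⟨b, hb⟩ := exists_isBestResponse π u2 σ P
  exact csSup_le ⟨_, b, hb, rfl⟩ fun _ ⟨b', hb', hx⟩ => hx ▸ h b' hb'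

lemma bLeaderValue_eq_bLeadU [Fintype B] {π : Θ → ℝ} {u1 : Θ → A → B → ℝ}
    {u2 : A → B → ℝ} {σ : Θ → A → ℝ} {P : A → B → ℝ} {b : B}
    (hb : IsBestResponse π u2 σ P b)
    (h : ∀ b', IsBestResponse π u2 σ P b' → bLeadU π u1 σ P b' ≤ bLeadU π u1 σ P b) :
    bLeaderValue π u1 u2 σ P = bLeadU π u1 σ P b :=
  IsGreatest.csSup_eq ⟨⟨b, hb, rfl⟩, fun _ ⟨b', hb', hx⟩ => hx ▸ h b' hb'⟩

lemma bLeadU_mem_bInnerSet {π : Θ → ℝ} (hπ : ∀ θ, 0 ≤ π θ) (u1 : Θ → A → B → ℝ)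
    {u2 : A → B → ℝ} {σ : Θ → A → ℝ} {P : A → B → ℝ} (hσ : ∀ θ, IsDist (σ θ))
    (hP : ∀ a b, 0 ≤ P a b) {b : B} (hb : IsBestResponse π u2 σ P b) :
    bLeadU π u1 σ P b ∈ bInnerSet π u1 u2 b := by
  have hpay (b' : B) : 0 ≤ exAnte π σ (fun _ a => P a b') :=
    exAnte_nonneg hπ (fun θ => (hσ θ).1) fun _ a => hP a b'
  refine ⟨σ, _, hσ, hpay b, fun b' => ?_, bLeadU_eq π u1 σ P b⟩
  have := hb b'
  rw [bFolU_eq, bFolU_eq] at this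
  exact (le_add_of_nonneg_right (hpay b')).trans this

def bonusPayment [DecidableEq B] (c : ℝ) (b : B) : A → B → ℝ :=
  fun _ b' => if b' = b then c else 0

omit [Fintype A] in
lemma bonusPayment_nonneg [DecidableEq B] {c : ℝ} (hc : 0 ≤ c) (b : B) (a : A) (b' : B) :
    0 ≤ bonusPayment c b a b' := by
  unfold bonusPayment
  split_ifs <;> simp [hc]

lemma bFolU_bonusPayment [DecidableEq B] {π : Θ → ℝ} (hπ : IsDist π) (u2 : A → B → ℝ)
    {p : Θ → A → ℝ} (hp : ∀ θ, IsDist (p θ)) (c : ℝ) (b b' : B) :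
    bFolU π u2 p (bonusPayment c b) b' =
      exAnte π p (fun _ a => u2 a b') + if b' = b then c else 0 := by
  rw [bFolU_eq]
  exact congrArg _ (exAnte_const hπ hp _)

lemma bLeadU_bonusPayment [DecidableEq B] {π : Θ → ℝ} (hπ : IsDist π) (u1 : Θ → A → B → ℝ)
    {p : Θ → A → ℝ} (hp : ∀ θ, IsDist (p θ)) (c : ℝ) (b : B) :
    bLeadU π u1 p (bonusPayment c b) b = exAnte π p (fun θ a => u1 θ a b) - c := by
  rw [bLeadU_eq]
  simpa [bonusPayment] using exAnte_const hπ hp c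

lemma isBestResponse_bonusPayment [DecidableEq B] {π : Θ → ℝ} (hπ : IsDist π)
    {u2 : A → B → ℝ} {p : Θ → A → ℝ} (hp : ∀ θ, IsDist (p θ)) {c : ℝ} {b : B}
    (hc : ∀ b', exAnte π p (fun _ a => u2 a b') ≤ exAnte π p (fun _ a => u2 a b) + c) :
    IsBestResponse π u2 p (bonusPayment c b) b := by
  intro b'
  rw [bFolU_bonusPayment hπ u2 hp, bFolU_bonusPayment hπ u2 hp, if_pos rfl]
  split_ifs with h
  · rw [h]
  · simpa using hc b'

/-- The least payment for `b` making `b` a best response of the follower against `p`. -/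
def minBonus [Fintype B] (π : Θ → ℝ) (u2 : A → B → ℝ) (p : Θ → A → ℝ) (b : B) : ℝ :=
  univ.sup' (univ_nonempty_iff.2 ⟨b⟩) fun b' =>
    exAnte π p (fun _ a => u2 a b') - exAnte π p (fun _ a => u2 a b)

lemma minBonus_le_iff [Fintype B] {π : Θ → ℝ} {u2 : A → B → ℝ} {p : Θ → A → ℝ} {b : B}
    {c : ℝ} : minBonus π u2 p b ≤ c ↔
      ∀ b', exAnte π p (fun _ a => u2 a b') ≤ exAnte π p (fun _ a => u2 a b) + c := by
  rw [minBonus, sup'_le_iff]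
  simp only [mem_univ, true_implies, sub_le_iff_le_add']

lemma minBonus_nonneg [Fintype B] (π : Θ → ℝ) (u2 : A → B → ℝ) (p : Θ → A → ℝ) (b : B) :
    0 ≤ minBonus π u2 p b :=
  le_sup'_of_le _ (mem_univ b) (sub_self _).ge

lemma continuous_minBonus [Fintype B] (π : Θ → ℝ) (u2 : A → B → ℝ) (b : B) :
    Continuous fun p => minBonus π u2 p b :=
  Continuous.finset_sup'_apply _ fun _ _ =>
    (continuous_exAnte π _).sub (continuous_exAnte π _)

def innerObjective [Fintype B] (π : Θ → ℝ) (u1 : Θ → A → B → ℝ) (u2 : A → B → ℝ)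
    (p : Θ → A → ℝ) (b : B) : ℝ :=
  exAnte π p (fun θ a => u1 θ a b) - minBonus π u2 p b

lemma mem_bInnerSet_iff [Fintype B] {π : Θ → ℝ} {u1 : Θ → A → B → ℝ} {u2 : A → B → ℝ}
    {b : B} {x : ℝ} :
    x ∈ bInnerSet π u1 u2 b ↔
      ∃ p : Θ → A → ℝ, (∀ θ, IsDist (p θ)) ∧ x ≤ innerObjective π u1 u2 p b := by
  constructor
  · rintro ⟨p, c, hp, -, hc, rfl⟩
    exact ⟨p, hp, sub_le_sub_left (minBonus_le_iff.2 hc) _⟩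
  · rintro ⟨p, hp, hx⟩
    have hc : minBonus π u2 p b ≤ exAnte π p (fun θ a => u1 θ a b) - x := by
      unfold innerObjective at hx
      linarith
    exact ⟨p, _, hp, (minBonus_nonneg π u2 p b).trans hc, minBonus_le_iff.1 hc,
      (sub_sub_cancel _ _).symm⟩

lemma exists_isGreatest_bInnerSet [Fintype B] [Nonempty A] (π : Θ → ℝ)
    (u1 : Θ → A → B → ℝ) (u2 : A → B → ℝ) (b : B) :
    ∃ m, IsGreatest (bInnerSet π u1 u2 b) m := by
  classical
  set K : Set (Θ → A → ℝ) := Set.univ.pi fun _ => stdSimplex ℝ A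
  have hK (p : Θ → A → ℝ) : p ∈ K ↔ ∀ θ, IsDist (p θ) := by
    simp only [K, Set.mem_pi, Set.mem_univ, true_implies]
    rfl
  have hKne : K.Nonempty := ⟨fun _ => Pi.single (Classical.arbitrary A) 1,
    fun _ _ => single_mem_stdSimplex ℝ _⟩
  have hcont : Continuous fun p => innerObjective π u1 u2 p b :=
    (continuous_exAnte π _).sub (continuous_minBonus π u2 b)
  obtain ⟨p, hpK, hmax⟩ :=
    (isCompact_univ_pi fun _ => isCompact_stdSimplex ℝ A).exists_isMaxOn hKne hcont.continuousOn
  refine ⟨_, mem_bInnerSet_iff.2 ⟨p, (hK p).1 hpK, le_rfl⟩, fun x hx => ?_⟩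
  obtain ⟨q, hq, hxq⟩ := mem_bInnerSet_iff.1 hx
  exact hxq.trans (hmax ((hK q).2 hq))

end Development

theorem stmt17 {Θ A B : Type*} [Fintype Θ] [Fintype A] [Fintype B]
    [Nonempty A] [Nonempty B]
    (π : Θ → ℝ) (hπ : IsDist π) (u1 : Θ → A → B → ℝ) (u2 : A → B → ℝ) :
    IsGreatest (bCommitVals π u1 u2)
        (sSup {y | ∃ b : B, y = sSup (bInnerSet π u1 u2 b)})
    ∧ ∀ b : B, IsGreatest (bInnerSet π u1 u2 b) (sSup (bInnerSet π u1 u2 b)) := by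
  classical
  have hInner (b : B) : IsGreatest (bInnerSet π u1 u2 b) (sSup (bInnerSet π u1 u2 b)) := by
    obtain ⟨m, hm⟩ := exists_isGreatest_bInnerSet π u1 u2 b
    rwa [hm.csSup_eq]
  obtain ⟨bs, -, hbs⟩ :=
    exists_max_image univ (fun b => sSup (bInnerSet π u1 u2 b)) univ_nonempty
  have hOuter : IsGreatest {y | ∃ b : B, y = sSup (bInnerSet π u1 u2 b)}
      (sSup (bInnerSet π u1 u2 bs)) :=
    ⟨⟨bs, rfl⟩, by rintro _ ⟨b, rfl⟩; exact hbs b (mem_univ b)⟩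
  have hBound {σ : Θ → A → ℝ} {P : A → B → ℝ} (hσ : ∀ θ, IsDist (σ θ))
      (hP : ∀ a b, 0 ≤ P a b) (b : B) (hb : IsBestResponse π u2 σ P b) :
      bLeadU π u1 σ P b ≤ sSup (bInnerSet π u1 u2 bs) :=
    ((hInner b).2 (bLeadU_mem_bInnerSet hπ.1 u1 hσ hP hb)).trans (hbs b (mem_univ b))
  rw [hOuter.csSup_eq]
  refine ⟨⟨?_, ?_⟩, hInner⟩
  · obtain ⟨p, c, hp, hc, hcons, hval⟩ := (hInner bs).1
    have hP := bonusPayment_nonneg (A := A) hc bs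
    have hLead : bLeadU π u1 p (bonusPayment c bs) bs = sSup (bInnerSet π u1 u2 bs) :=
      (bLeadU_bonusPayment hπ u1 hp c bs).trans hval.symm
    refine ⟨p, bonusPayment c bs, hp, hP, ?_⟩
    rw [bLeaderValue_eq_bLeadU (isBestResponse_bonusPayment hπ hp hcons)
      fun b' hb' => hLead ▸ hBound hp hP b' hb', hLead]
  · rintro _ ⟨σ, P, hσ, hP, rfl⟩
    exact bLeaderValue_le (hBound hσ hP)
end
end
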